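/- Parking games are supermodular: for any parking function α of length n, the characteristic function c_α satisfies c_α(S ∪ {i}) - c_α(S) ≤ c_α(T ∪ {i}) - c_α(T) for all i ∈ [n] and all S ⊆ T ⊆ [n] \ {i}. -/

import Mathlib

/-! A car with preference `a` that parks in spot `p` drives past exactly the spots `a, …, p - 1`,
so the total displacement is the sum over spots `j` of the number of cars driving past `j`. That
number is the maximum over `t ≤ j` of the excess of cars preferring a spot in `(t, j]` over the
free spots there, and a list of preferences parks iff no car drives past the last spot; in
particular every coalition of a parking function parks.

Adding a car with preference `a` raises the excess by one exactly for `t < a ≤ j`. For coalitions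
`S ⊆ T` the difference of their excesses counts the cars of `T \ S` preferring `(t, j]`, which is
antitone in `t`; hence the bump raises the maximum for `T` at least as much as for `S`, spot by
spot, which is supermodularity. -/

/-- Sequential parking process on a street with `m` spots: given the list of
preferences of the cars (in arrival order) and the set of already occupied
spots, return the list of spots in which the cars park (in arrival order),
or `none` if some car fails to park. Car with preference `a` parks in the
first unoccupied spot `j` with `a ≤ j ≤ m`. -/
def park (m : ℕ) : List ℕ → Finset ℕ → Option (List ℕ)
  | [], _ => some []
  | a :: as, occ =>
    match ((List.range' a (m + 1 - a)).filter fun j => decide (j ∉ occ)).head? with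
    | none => none
    | some p => (park m as (insert p occ)).map (p :: ·)

/-- `α` is an `(n, m)`-parking function: `n` cars with preferences in `[m]`,
all of which park successfully. -/
def IsPF (n m : ℕ) (α : List ℕ) : Prop :=
  α.length = n ∧ (∀ a ∈ α, 1 ≤ a ∧ a ≤ m) ∧ (park m α ∅).isSome

/-- Total displacement: the sum over cars of (parking spot − preference). -/
def disp (m : ℕ) (α : List ℕ) : ℕ :=
  match park m α ∅ with
  | some ps => ((ps.zip α).map fun x => x.1 - x.2).sum
  | none => 0

/-- The set of spots occupied at the end of the parking process. -/
def occSet (m : ℕ) (α : List ℕ) : Finset ℕ :=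
  match park m α ∅ with
  | some ps => ps.toFinset
  | none => ∅

/-- The characteristic function of the parking game of `α`: the total
displacement of the sub-tuple of preferences indexed by the coalition `S`,
parked on a street with `n` spots. -/
def gameCost (n : ℕ) (α : Fin n → ℕ) (S : Finset (Fin n)) : ℕ :=
  disp n ((S.sort (· ≤ ·)).map α)

/-- The Shapley value of a coalitional cost game `c` on players `Fin n`. -/
noncomputable def shapley (n : ℕ) (c : Finset (Fin n) → ℕ) (i : Fin n) : ℚ :=
  (1 / (n.factorial : ℚ)) * ∑ π : Equiv.Perm (Fin n),
    ((c (Finset.univ.filter fun j => π j ≤ π i) : ℚ) -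
     (c (Finset.univ.filter fun j => π j < π i) : ℚ))

open Finset
open scoped List

def arrivals (β : List ℕ) (t j : ℕ) : ℕ := β.countP fun b => t < b ∧ b ≤ j

def freeSpots (occ : Finset ℕ) (t j : ℕ) : ℕ := #{q ∈ Ioc t j | q ∉ occ}

def excess (β : List ℕ) (occ : Finset ℕ) (t j : ℕ) : ℤ := arrivals β t j - freeSpots occ t j

/-- The number of cars of `β` that drive past spot `j` when they park on a street whose spots
`occ` are already taken. -/
def overflow (β : List ℕ) (occ : Finset ℕ) (j : ℕ) : ℤ :=
  (range (j + 1)).sup' nonempty_range_add_one fun t => excess β occ t j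

section Overflow

variable {β β' βS βT : List ℕ} {occ : Finset ℕ} {a p t u j : ℕ}

lemma excess_le_overflow (ht : t ≤ j) : excess β occ t j ≤ overflow β occ j :=
  le_sup' (fun t => excess β occ t j) (mem_range.2 (Nat.lt_succ_of_le ht))

lemma overflow_le {c : ℤ} (h : ∀ t ≤ j, excess β occ t j ≤ c) : overflow β occ j ≤ c :=
  sup'_le _ _ fun t ht => h t (Nat.le_of_lt_succ (mem_range.1 ht))

lemma exists_excess_eq_overflow : ∃ t ≤ j, excess β occ t j = overflow β occ j := by
  obtain ⟨t, ht, h⟩ := exists_mem_eq_sup' nonempty_range_add_one fun t => excess β occ t j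
  exact ⟨t, Nat.le_of_lt_succ (mem_range.1 ht), h.symm⟩

lemma excess_self : excess β occ j j = 0 := by
  simp [excess, arrivals, freeSpots]

lemma overflow_nonneg : 0 ≤ overflow β occ j :=
  excess_self.symm.le.trans (excess_le_overflow le_rfl)

lemma overflow_nil : overflow [] occ j = 0 :=
  le_antisymm (overflow_le fun t _ => by simp [excess, arrivals]) overflow_nonneg

lemma arrivals_cons :
    arrivals (a :: β) t j = arrivals β t j + if t < a ∧ a ≤ j then 1 else 0 := by
  simp [arrivals, List.countP_cons]

lemma excess_cons :
    excess (a :: β) occ t j = excess β occ t j + if t < a ∧ a ≤ j then 1 else 0 := by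
  rw [excess, excess, arrivals_cons]
  push_cast
  ring

lemma arrivals_le_arrivals_of_le (h : t ≤ u) : arrivals β u j ≤ arrivals β t j :=
  List.countP_mono_left fun b _ hb => by simp only [decide_eq_true_eq] at hb ⊢; omega

lemma arrivals_le_of_subperm (h : β' <+~ β) : arrivals β' t j ≤ arrivals β t j :=
  h.countP_le _

lemma overflow_le_of_subperm (h : β' <+~ β) : overflow β' occ j ≤ overflow β occ j :=
  overflow_le fun t ht => by
    refine le_trans ?_ (excess_le_overflow ht)
    have := arrivals_le_of_subperm (t := t) (j := j) h
    simp only [excess]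
    omega

lemma overflow_perm (h : β ~ β') : overflow β occ j = overflow β' occ j :=
  le_antisymm (overflow_le_of_subperm h.subperm) (overflow_le_of_subperm h.symm.subperm)

lemma freeSpots_insert (hp : p ∉ occ) :
    freeSpots (insert p occ) t j + (if t < p ∧ p ≤ j then 1 else 0) = freeSpots occ t j := by
  have : {q ∈ Ioc t j | q ∉ insert p occ} = {q ∈ Ioc t j | q ∉ occ}.erase p := by
    ext q
    simp only [mem_filter, mem_erase, mem_insert, mem_Ioc]
    tauto
  rw [freeSpots, freeSpots, this]
  by_cases hpj : t < p ∧ p ≤ j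
  · have hmem : p ∈ {q ∈ Ioc t j | q ∉ occ} := by simp [hpj.1, hpj.2, hp]
    rw [card_erase_of_mem hmem, if_pos hpj, Nat.sub_add_cancel (card_pos.2 ⟨p, hmem⟩)]
  · have hmem : p ∉ {q ∈ Ioc t j | q ∉ occ} := by simp only [mem_filter, mem_Ioc]; tauto
    rw [erase_eq_of_notMem hmem, if_neg hpj, add_zero]

lemma excess_insert (hp : p ∉ occ) :
    excess β (insert p occ) t j = excess β occ t j + if t < p ∧ p ≤ j then 1 else 0 := by
  rw [excess, excess, ← freeSpots_insert hp]
  push_cast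
  ring

lemma excess_le_of_occupied (htu : t ≤ u) (hocc : ∀ q, t < q → q ≤ u → q ∈ occ) :
    excess β occ u j ≤ excess β occ t j := by
  have hfree : freeSpots occ u j = freeSpots occ t j := by
    unfold freeSpots
    congr 1
    ext q
    simp only [mem_filter, mem_Ioc]
    constructor
    · rintro ⟨⟨h1, h2⟩, h3⟩
      exact ⟨⟨by omega, h2⟩, h3⟩
    · rintro ⟨⟨h1, h2⟩, h3⟩
      exact ⟨⟨not_le.1 fun h => h3 (hocc q h1 h), h2⟩, h3⟩
  have := arrivals_le_arrivals_of_le (β := β) (j := j) htu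
  simp only [excess, hfree]
  omega

lemma overflow_cons (ha : 1 ≤ a) (hap : a ≤ p) (hp : p ∉ occ)
    (hocc : ∀ q, a ≤ q → q < p → q ∈ occ) :
    overflow (a :: β) occ j = overflow β (insert p occ) j + if a ≤ j ∧ j < p then 1 else 0 := by
  have hplateau : ∀ t, a ≤ t → t < p → excess β occ t j ≤ excess β occ (a - 1) j :=
    fun t hat htp => excess_le_of_occupied (by omega) fun q h1 h2 => hocc q (by omega) (by omega)
  apply le_antisymm
  · refine overflow_le fun t ht => ?_
    have := excess_le_overflow (β := β) (occ := insert p occ) ht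
    rw [excess_cons]
    rw [excess_insert hp] at this
    split_ifs at * <;> omega
  · obtain ⟨t, ht, hmax⟩ := exists_excess_eq_overflow (β := β) (occ := insert p occ) (j := j)
    rw [← hmax, excess_insert hp]
    by_cases hplat : a ≤ t ∧ t < p
    · have h1 := excess_le_overflow (β := a :: β) (occ := occ) (t := a - 1) (j := j) (by omega)
      have h2 := hplateau t hplat.1 hplat.2
      rw [excess_cons] at h1
      split_ifs at * <;> omega
    · have h1 := excess_le_overflow (β := a :: β) (occ := occ) ht
      rw [excess_cons] at h1
      split_ifs at * <;> omega

theorem overflow_cons_add_le_of_subperm (a : ℕ) (h : βS <+~ βT) :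
    overflow (a :: βS) occ j + overflow βT occ j ≤
      overflow (a :: βT) occ j + overflow βS occ j := by
  obtain ⟨l, hl⟩ : ∃ l, βT ~ βS ++ l := by
    obtain ⟨β₀, hperm, hsub⟩ := h
    obtain ⟨l, hl⟩ := hsub.exists_perm_append
    exact ⟨l, hl.trans (hperm.append_right l)⟩
  have hgap : ∀ t u, t ≤ u →
      excess βT occ u j - excess βS occ u j ≤ excess βT occ t j - excess βS occ t j := by
    intro t u htu
    have := arrivals_le_arrivals_of_le (β := l) (j := j) htu
    simp only [excess, arrivals, hl.countP_eq, List.countP_append] at this ⊢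
    push_cast
    omega
  obtain ⟨u, hu, hmax⟩ := exists_excess_eq_overflow (β := βT) (occ := occ) (j := j)
  rw [← hmax, ← le_sub_iff_add_le]
  refine overflow_le fun t ht => ?_
  rw [le_sub_iff_add_le, excess_cons]
  have h1 := excess_le_overflow (β := βS) (occ := occ) ht
  have h2 := excess_le_overflow (β := a :: βT) (occ := occ) ht
  have h3 := excess_le_overflow (β := a :: βT) (occ := occ) hu
  have h4 := excess_le_overflow (β := βS) (occ := occ) hu
  rw [excess_cons] at h2 h3
  rcases le_or_gt t u with htu | hut
  · have := hgap t u htu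
    split_ifs at * <;> omega
  · split_ifs at * <;> omega

end Overflow

section Parking

variable {m a p : ℕ} {β ps : List ℕ} {occ : Finset ℕ}

def firstFree (m a : ℕ) (occ : Finset ℕ) : Option ℕ :=
  ((List.range' a (m + 1 - a)).filter fun j => decide (j ∉ occ)).head?

lemma park_cons :
    park m (a :: β) occ =
      (firstFree m a occ).bind fun p => (park m β (insert p occ)).map (p :: ·) := by
  rw [park, firstFree]
  cases (List.filter (fun j => decide (j ∉ occ)) (List.range' a (m + 1 - a))).head? <;> rfl

lemma firstFree_eq_some :
    firstFree m a occ = some p ↔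
      a ≤ p ∧ p ≤ m ∧ p ∉ occ ∧ ∀ q, a ≤ q → q < p → q ∈ occ := by
  simp only [firstFree, List.head?_filter, List.find?_range'_eq_some, List.mem_range'_1,
    decide_eq_true_eq, Bool.not_eq_eq_eq_not, Bool.not_true, decide_eq_false_iff_not, not_not]
  constructor
  · rintro ⟨hp, ⟨hap, hpm⟩, hocc⟩
    exact ⟨hap, by omega, hp, hocc⟩
  · rintro ⟨hap, hpm, hp, hocc⟩
    exact ⟨hp, ⟨hap, by omega⟩, hocc⟩

lemma firstFree_eq_none : firstFree m a occ = none ↔ ∀ q, a ≤ q → q ≤ m → q ∈ occ := by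
  simp only [firstFree, List.head?_filter, List.find?_range'_eq_none, Bool.not_eq_eq_eq_not,
    Bool.not_true, decide_eq_false_iff_not, not_not]
  exact forall_congr' fun q => ⟨fun h h1 h2 => h h1 (by omega), fun h h1 h2 => h h1 (by omega)⟩

lemma park_isSome_iff (hβ : ∀ b ∈ β, 1 ≤ b ∧ b ≤ m) :
    (park m β occ).isSome ↔ overflow β occ m = 0 := by
  induction β generalizing occ with
  | nil => simp [park, overflow_nil]
  | cons a β ih =>
    have ha := hβ a List.mem_cons_self
    rw [park_cons]
    cases hfree : firstFree m a occ with
    | none =>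
      -- every spot from `a` on is taken, so car `a` alone leaves an excess on `(a - 1, m]`
      have hocc := firstFree_eq_none.1 hfree
      have h1 : excess β occ m m ≤ excess β occ (a - 1) m :=
        excess_le_of_occupied (by omega) fun q h1 h2 => hocc q (by omega) h2
      have h2 := excess_le_overflow (β := a :: β) (occ := occ) (t := a - 1) (j := m) (by omega)
      rw [excess_self] at h1
      rw [excess_cons, if_pos (by omega)] at h2
      simp only [Option.bind_none, Option.isSome_none, Bool.false_eq_true, false_iff]
      omega
    | some p =>
      obtain ⟨hap, hpm, hp, hocc⟩ := firstFree_eq_some.1 hfree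
      rw [overflow_cons ha.1 hap hp hocc, if_neg (by omega), add_zero]
      simpa using ih (fun b hb => hβ b (List.mem_cons_of_mem a hb))

lemma sum_displacement_eq_sum_overflow (hβ : ∀ b ∈ β, 1 ≤ b) (h : park m β occ = some ps) :
    ((((ps.zip β).map fun x => x.1 - x.2).sum : ℕ) : ℤ) = ∑ j ∈ range m, overflow β occ j := by
  induction β generalizing occ ps with
  | nil =>
    simp only [park, Option.some_inj] at h
    simp [← h, overflow_nil]
  | cons a β ih =>
    rw [park_cons] at h
    cases hfree : firstFree m a occ with
    | none => simp [hfree] at h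
    | some p =>
      obtain ⟨hap, hpm, hp, hocc⟩ := firstFree_eq_some.1 hfree
      simp only [hfree, Option.bind_some, Option.map_eq_some_iff] at h
      obtain ⟨ps, hps, rfl⟩ := h
      have hcrossed : ∑ j ∈ range m, (if a ≤ j ∧ j < p then 1 else 0 : ℤ) = p - a := by
        rw [sum_boole, show {j ∈ range m | a ≤ j ∧ j < p} = Ico a p by
          ext; simp only [mem_filter, mem_range, mem_Ico]; omega,
          Nat.card_Ico, Nat.cast_sub hap]
      rw [sum_congr rfl fun j _ => overflow_cons (hβ a List.mem_cons_self) hap hp hocc,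
        sum_add_distrib, hcrossed, ← ih (fun b hb => hβ b (List.mem_cons_of_mem a hb)) hps]
      simp only [List.zip_cons_cons, List.map_cons, List.sum_cons]
      push_cast [Nat.cast_sub hap]
      ring

lemma disp_eq_sum_overflow (hβ : ∀ b ∈ β, 1 ≤ b) (h : (park m β ∅).isSome) :
    (disp m β : ℤ) = ∑ j ∈ range m, overflow β ∅ j := by
  obtain ⟨ps, hps⟩ := Option.isSome_iff_exists.1 h
  rw [disp, hps]
  exact sum_displacement_eq_sum_overflow hβ hps

end Parking

section Game

variable {n : ℕ} {α : Fin n → ℕ} {X Y : Finset (Fin n)} {i : Fin n}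

def coalitionPrefs (α : Fin n → ℕ) (X : Finset (Fin n)) : List ℕ := (X.sort (· ≤ ·)).map α

lemma coe_coalitionPrefs : (coalitionPrefs α X : Multiset ℕ) = X.val.map α := by
  rw [coalitionPrefs, ← Multiset.map_coe, sort_eq]

lemma coalitionPrefs_subperm (h : X ⊆ Y) : coalitionPrefs α X <+~ coalitionPrefs α Y := by
  rw [← Multiset.coe_le, coe_coalitionPrefs, coe_coalitionPrefs]
  exact Multiset.map_le_map (val_le_iff.2 h)

lemma coalitionPrefs_insert (hi : i ∉ X) :
    coalitionPrefs α (insert i X) ~ α i :: coalitionPrefs α X := by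
  rw [← Multiset.coe_eq_coe, coe_coalitionPrefs, insert_val_of_notMem hi, Multiset.map_cons,
    ← Multiset.cons_coe, coe_coalitionPrefs]

lemma coalitionPrefs_univ : coalitionPrefs α univ ~ List.ofFn α := by
  rw [← Multiset.coe_eq_coe, coe_coalitionPrefs, Fin.univ_val_map]

lemma gameCost_eq_sum_overflow (h : IsPF n n (List.ofFn α)) (X : Finset (Fin n)) :
    (gameCost n α X : ℤ) = ∑ j ∈ range n, overflow (coalitionPrefs α X) ∅ j := by
  obtain ⟨-, hrange, hparks⟩ := h
  have hsub : coalitionPrefs α X <+~ List.ofFn α :=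
    (coalitionPrefs_subperm (subset_univ X)).trans coalitionPrefs_univ.subperm
  have hX : ∀ b ∈ coalitionPrefs α X, 1 ≤ b ∧ b ≤ n := fun b hb => hrange b (hsub.subset hb)
  refine disp_eq_sum_overflow (fun b hb => (hX b hb).1) ((park_isSome_iff hX).2 ?_)
  refine le_antisymm ?_ overflow_nonneg
  exact ((park_isSome_iff hrange).1 hparks) ▸ overflow_le_of_subperm hsub

end Game

/-- parking games are supermodular:
`c_α(S ∪ {i}) − c_α(S) ≤ c_α(T ∪ {i}) − c_α(T)` for all `i` and
`S ⊆ T ⊆ [n] \ {i}` (stated additively to avoid truncated subtraction). -/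
theorem stmt12 (n : ℕ) (α : Fin n → ℕ) (h : IsPF n n (List.ofFn α))
    (i : Fin n) (S T : Finset (Fin n)) (hST : S ⊆ T) (hiT : i ∉ T) :
    gameCost n α (insert i S) + gameCost n α T ≤
      gameCost n α (insert i T) + gameCost n α S := by
  have hcost := gameCost_eq_sum_overflow h
  zify
  rw [hcost, hcost, hcost, hcost, ← sum_add_distrib, ← sum_add_distrib]
  refine sum_le_sum fun j _ => ?_
  rw [overflow_perm (coalitionPrefs_insert fun hiS => hiT (hST hiS)),
    overflow_perm (coalitionPrefs_insert hiT)]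
  exact overflow_cons_add_le_of_subperm (α i) (coalitionPrefs_subperm hST)
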